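/- Let d ≥ 5. For all a ∈ ℤ^d and all n ≥ 1, ∑_{x ∈ ℤ^d} ∑_{y ∈ ℤ^d} G_n(0,x) G_n(0,y) G(0, x − y − a) ≤ ∑_{x ∈ ℤ^d} ∑_{y ∈ ℤ^d} G_n(0,x) G_n(0,y) G(0, x − y). -/

import Mathlib

open MeasureTheory ProbabilityTheory Filter

noncomputable section

/-- The uniform probability measure on `[0,1)`: the driving randomness for the walk. -/
def P0 : Measure ℝ := volume.restrict (Set.Ico (0:ℝ) 1)

/-- `i`-th digit of `u` in base `b`.  For `u ∈ [0,1)` these digits are i.i.d. uniform on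
`{0, …, b-1}` under `P0`. -/
def digit (b i : ℕ) (u : ℝ) : ℕ := (⌊u * (b : ℝ) ^ (i + 1)⌋).toNat % b

/-- Enumeration of the `2d` unit vectors of `ℤ^d`: `stepVec d j = e_j` for `j < d` and
`stepVec d j = -e_{j-d}` for `d ≤ j < 2d`. -/
def stepVec (d j : ℕ) : Fin d → ℤ :=
  fun i => if j < d then (if (i : ℕ) = j then 1 else 0)
    else (if (i : ℕ) = j - d then -1 else 0)

/-- Simple random walk on `ℤ^d` started at `x`, at time `n`, driven by the base-`2d`
digits of `u` (which are i.i.d. uniform on the `2d` unit steps under `P0`). -/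
def walk (d : ℕ) (x : Fin d → ℤ) (u : ℝ) (n : ℕ) : Fin d → ℤ :=
  x + ∑ i ∈ Finset.range n, stepVec d (digit (2 * d) i u)

/-- Probability that the walk started at `x` never returns to `A` after time `0`,
i.e. `P_x(T_A^+ = ∞)`. -/
def escProb (d : ℕ) (A : Set (Fin d → ℤ)) (x : Fin d → ℤ) : ℝ :=
  (P0 {u | ∀ t, 1 ≤ t → walk d x u t ∉ A}).toReal

/-- Capacity of a finite subset of `ℤ^d`. -/
def capa (d : ℕ) (A : Finset (Fin d → ℤ)) : ℝ :=
  ∑ x ∈ A, escProb d (↑A) x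

/-- Green kernel of the simple random walk on `ℤ^d`:
`G(x,y) = E_x[∑_{t≥0} 1(S_t = y)] = ∑_{t≥0} P_x(S_t = y)`. -/
def green (d : ℕ) (x y : Fin d → ℤ) : ℝ :=
  (∑' t : ℕ, P0 {u | walk d x u t = y}).toReal

/-- Range `R[m,n] = {S_m, …, S_n}` of the walk started at `x`, driven by `u`. -/
def walkRange (d : ℕ) (x : Fin d → ℤ) (u : ℝ) (m n : ℕ) : Finset (Fin d → ℤ) :=
  (Finset.Icc m n).image (walk d x u)

open scoped ENNReal

/-- Green kernel with values in `ℝ≥0∞`. -/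
def greenE (d : ℕ) (x y : Fin d → ℤ) : ℝ≥0∞ := ∑' t : ℕ, P0 {u | walk d x u t = y}

/-- Green kernel up to time `n` (summing over `0 ≤ k ≤ n-1`), with values in `ℝ≥0∞`. -/
def greenNE (d n : ℕ) (x y : Fin d → ℤ) : ℝ≥0∞ :=
  ∑ t ∈ Finset.range n, P0 {u | walk d x u t = y}

/-!
The `t`-step law `p_t` of the walk is symmetric and satisfies Chapman–Kolmogorov, so
`p_{2s}(z) = ∑_v p_s(v) p_s(v - z)` is an autocorrelation. One more step keeps this structure:
since `(δ₀ + δ_e) ⋆ (δ₀ + δ_{-e}) = 2δ₀ + δ_e + δ_{-e}`, the kernel `2d (p_{2s} + p_{2s+1})` is the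
sum over `j < d` of the autocorrelations of `β_j = p_s + p_s(· - e_j)`. Hence
`G(0, ·) = ∑_s (p_{2s} + p_{2s+1})` is a nonnegative combination of autocorrelations. For the
autocorrelation `K` of `β`, `∑_{x,y} f(x) f(y) K(x - y - a) = ∑_u C(u) C(u + a)` with
`C(u) = ∑_x f(x) β(u + x)`, and by AM–GM this is at most `∑_u C(u)²`, the value at `a = 0`.
-/

lemma ENNReal.two_mul_mul_le_add_mul_self (x y : ℝ≥0∞) : 2 * (x * y) ≤ x * x + y * y := by
  rcases eq_or_ne x ⊤ with rfl | hx
  · rcases eq_or_ne y 0 with rfl | hy <;> simp [*]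
  rcases eq_or_ne y ⊤ with rfl | hy
  · rcases eq_or_ne x 0 with rfl | hx0 <;> simp [*]
  lift x to NNReal using hx
  lift y to NNReal using hy
  have := two_mul_le_add_sq x y
  rw [sq, sq, mul_assoc] at this
  exact_mod_cast this

section Rearrangement

variable {G : Type*} [AddCommGroup G]

def autocorr (β : G → ℝ≥0∞) (z : G) : ℝ≥0∞ := ∑' v, β v * β (v - z)

lemma autocorr_add_comp_sub (β : G → ℝ≥0∞) (e z : G) :
    autocorr (fun v => β v + β (v - e)) z
      = 2 * autocorr β z + autocorr β (z + e) + autocorr β (z - e) := by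
  have shift : ∀ w, ∑' v, β (v - e) * β (v - w) = autocorr β (w - e) := fun w => by
    rw [← (Equiv.addRight e).tsum_eq]
    simp only [autocorr, Equiv.coe_addRight, add_sub_cancel_right, sub_sub_eq_add_sub]
  have expand : ∀ v, (β v + β (v - e)) * (β (v - z) + β (v - z - e))
      = β v * β (v - z) + β (v - e) * β (v - (z + e)) + β v * β (v - (z + e))
        + β (v - e) * β (v - z) := fun v => by rw [sub_sub]; ring
  rw [autocorr, tsum_congr expand, ENNReal.tsum_add, ENNReal.tsum_add, ENNReal.tsum_add, shift,
    shift, add_sub_cancel_right, two_mul]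
  rfl

def SatisfiesRearrangement (K : G → ℝ≥0∞) : Prop :=
  ∀ (f : G → ℝ≥0∞) (c : G),
    ∑' p : G × G, f p.1 * f p.2 * K (p.1 - p.2 - c) ≤ ∑' p : G × G, f p.1 * f p.2 * K (p.1 - p.2)

lemma tsum_mul_add_le_tsum_mul_self (C : G → ℝ≥0∞) (c : G) :
    ∑' u, C u * C (u + c) ≤ ∑' u, C u * C u := by
  have h : 2 * ∑' u, C u * C (u + c) ≤ 2 * ∑' u, C u * C u :=
    calc 2 * ∑' u, C u * C (u + c)
        = ∑' u, 2 * (C u * C (u + c)) := ENNReal.tsum_mul_left.symm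
      _ ≤ ∑' u, (C u * C u + C (u + c) * C (u + c)) :=
        ENNReal.tsum_le_tsum fun u => ENNReal.two_mul_mul_le_add_mul_self _ _
      _ = ∑' u, C u * C u + ∑' u, C (u + c) * C (u + c) := ENNReal.tsum_add
      _ = 2 * ∑' u, C u * C u := by
        have h := (Equiv.addRight c).tsum_eq fun u => C u * C u
        simp only [Equiv.coe_addRight] at h
        rw [h, two_mul]
  exact (ENNReal.mul_le_mul_iff_right two_ne_zero ENNReal.ofNat_ne_top).mp h

lemma tsum_mul_autocorr_eq (f β : G → ℝ≥0∞) (c : G) :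
    ∑' p : G × G, f p.1 * f p.2 * autocorr β (p.1 - p.2 - c)
      = ∑' u, (∑' x, f x * β (u + x)) * (∑' y, f y * β (u + c + y)) := by
  calc ∑' p : G × G, f p.1 * f p.2 * autocorr β (p.1 - p.2 - c)
      = ∑' x, ∑' y, ∑' u, f x * β (u + x) * (f y * β (u + c + y)) := by
        rw [ENNReal.tsum_prod (f := fun x y => f x * f y * autocorr β (x - y - c))]
        refine tsum_congr fun x => tsum_congr fun y => ?_
        rw [autocorr, ← ENNReal.tsum_mul_left, ← (Equiv.addRight x).tsum_eq]
        refine tsum_congr fun u => ?_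
        rw [Equiv.coe_addRight, show u + x - (x - y - c) = u + c + y by abel]
        ring
    _ = ∑' u, ∑' x, ∑' y, f x * β (u + x) * (f y * β (u + c + y)) :=
        (tsum_congr fun _ => ENNReal.tsum_comm).trans ENNReal.tsum_comm
    _ = _ := by
        simp only [ENNReal.tsum_mul_left, ENNReal.tsum_mul_right]

namespace SatisfiesRearrangement

lemma autocorr (β : G → ℝ≥0∞) : SatisfiesRearrangement (autocorr β) := by
  intro f c
  have h0 := tsum_mul_autocorr_eq f β 0
  simp only [sub_zero, add_zero] at h0
  rw [tsum_mul_autocorr_eq, h0]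
  exact tsum_mul_add_le_tsum_mul_self (fun u => ∑' x, f x * β (u + x)) c

lemma tsum {ι : Type*} {K : ι → G → ℝ≥0∞} (hK : ∀ i, SatisfiesRearrangement (K i)) :
    SatisfiesRearrangement (fun z => ∑' i, K i z) := by
  intro f c
  simp only [← ENNReal.tsum_mul_left]
  rw [ENNReal.tsum_comm]
  conv_rhs => rw [ENNReal.tsum_comm]
  exact ENNReal.tsum_le_tsum fun i => hK i f c

lemma finsetSum {ι : Type*} {s : Finset ι} {K : ι → G → ℝ≥0∞}
    (hK : ∀ i ∈ s, SatisfiesRearrangement (K i)) :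
    SatisfiesRearrangement (fun z => ∑ i ∈ s, K i z) := by
  intro f c
  simp only [Finset.mul_sum]
  rw [Summable.tsum_finsetSum fun _ _ => ENNReal.summable,
    Summable.tsum_finsetSum fun _ _ => ENNReal.summable]
  exact Finset.sum_le_sum fun i hi => hK i hi f c

lemma const_mul {K : G → ℝ≥0∞} (hK : SatisfiesRearrangement K) (a : ℝ≥0∞) :
    SatisfiesRearrangement (fun z => a * K z) := by
  intro f c
  simp only [mul_left_comm _ a, ENNReal.tsum_mul_left]
  exact mul_le_mul_right (hK f c) a

end SatisfiesRearrangement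

end Rearrangement

section TransitionProbability

variable (d : ℕ)

lemma stepVec_add_left {j : ℕ} (hj : j < d) : stepVec d (d + j) = -stepVec d j := by
  funext i
  simp only [stepVec, Nat.add_sub_cancel_left, Pi.neg_apply, if_pos hj,
    if_neg (Nat.not_lt.mpr (Nat.le_add_right d j))]
  split_ifs <;> simp

lemma sum_fin_two_mul_stepVec {M : Type*} [AddCommMonoid M] (g : (Fin d → ℤ) → M) :
    ∑ j : Fin (2 * d), g (stepVec d j)
      = ∑ j ∈ Finset.range d, (g (stepVec d j) + g (-stepVec d j)) := by
  rw [Fin.sum_univ_eq_sum_range (fun j => g (stepVec d j)), two_mul, Finset.sum_range_add,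
    ← Finset.sum_add_distrib]
  exact Finset.sum_congr rfl fun j hj => by rw [stepVec_add_left d (Finset.mem_range.mp hj)]

def stepFlip : Equiv.Perm (Fin (2 * d)) :=
  Function.Involutive.toPerm (fun j => ⟨if j < d then j + d else j - d, by split_ifs <;> omega⟩)
    fun j => by ext; dsimp only; split_ifs <;> omega

lemma stepVec_stepFlip (j : Fin (2 * d)) : stepVec d (stepFlip d j) = -stepVec d j := by
  funext i
  change stepVec d (if (j : ℕ) < d then j + d else j - d) i = -stepVec d j i
  simp only [stepVec]
  split_ifs <;> omega

def stepSum {t : ℕ} (ω : Fin t → Fin (2 * d)) : Fin d → ℤ := ∑ i, stepVec d (ω i)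

/-- The paper's `p_t(0, v)`; `P0_walk_zero_eq` identifies it with the law of `walk d 0 · t`. -/
def transProb (t : ℕ) (v : Fin d → ℤ) : ℝ≥0∞ :=
  ∑ ω : Fin t → Fin (2 * d), if stepSum d ω = v then (2 * d : ℝ≥0∞)⁻¹ ^ t else 0

lemma stepSum_append {s t : ℕ} (ω₁ : Fin s → Fin (2 * d)) (ω₂ : Fin t → Fin (2 * d)) :
    stepSum d (Fin.append ω₁ ω₂) = stepSum d ω₁ + stepSum d ω₂ := by
  simp [stepSum, Fin.sum_univ_add]

lemma transProb_add (s t : ℕ) (w : Fin d → ℤ) :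
    transProb d (s + t) w = ∑' v, transProb d s v * transProb d t (w - v) := by
  have single : ∀ (ω₁ : Fin s → Fin (2 * d)) (ω₂ : Fin t → Fin (2 * d)),
      ∑' v, (if stepSum d ω₁ = v then (2 * d : ℝ≥0∞)⁻¹ ^ s else 0)
          * (if stepSum d ω₂ = w - v then (2 * d : ℝ≥0∞)⁻¹ ^ t else 0)
        = if stepSum d (Fin.append ω₁ ω₂) = w then (2 * d : ℝ≥0∞)⁻¹ ^ (s + t) else 0 := by
    intro ω₁ ω₂
    rw [tsum_eq_single (stepSum d ω₁) fun v hv => by simp [Ne.symm hv], stepSum_append]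
    simp [eq_sub_iff_add_eq', pow_add]
  simp only [transProb, Finset.sum_mul_sum]
  simp_rw [Summable.tsum_finsetSum fun _ _ => ENNReal.summable, single]
  rw [← (Fin.appendEquiv s t).sum_comp, Fintype.sum_prod_type]
  rfl

lemma transProb_succ (t : ℕ) (z : Fin d → ℤ) :
    transProb d (t + 1) z
      = (2 * d : ℝ≥0∞)⁻¹ * ∑ j : Fin (2 * d), transProb d t (z - stepVec d j) := by
  have stepSum_cons : ∀ (j : Fin (2 * d)) (ω : Fin t → Fin (2 * d)),
      stepSum d (Fin.consEquiv (fun _ => Fin (2 * d)) (j, ω)) = stepVec d j + stepSum d ω := by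
    intro j ω
    simp [stepSum, Fin.sum_univ_succ, Fin.consEquiv]
  rw [transProb, ← (Fin.consEquiv fun _ => Fin (2 * d)).sum_comp, Fintype.sum_prod_type,
    Finset.mul_sum]
  refine Finset.sum_congr rfl fun j _ => ?_
  simp [transProb, stepSum_cons, Finset.mul_sum, eq_sub_iff_add_eq', pow_succ']

lemma transProb_neg (t : ℕ) (v : Fin d → ℤ) : transProb d t (-v) = transProb d t v := by
  rw [transProb, transProb, ← (Equiv.piCongrRight fun _ => stepFlip d).sum_comp]
  refine Fintype.sum_congr _ _ fun ω => ?_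
  have flip : stepSum d (Equiv.piCongrRight (fun _ => stepFlip d) ω) = -stepSum d ω := by
    simp [stepSum, stepVec_stepFlip]
  simp only [flip, neg_inj]

lemma autocorr_transProb (s : ℕ) : autocorr (transProb d s) = transProb d (2 * s) := by
  funext z
  rw [two_mul, transProb_add, autocorr]
  exact tsum_congr fun v => by rw [← transProb_neg d s (v - z), neg_sub]

lemma transProb_two_mul_add_succ (hd : 0 < d) (s : ℕ) (z : Fin d → ℤ) :
    transProb d (2 * s) z + transProb d (2 * s + 1) z
      = (2 * d : ℝ≥0∞)⁻¹ * ∑ j ∈ Finset.range d,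
          autocorr (fun v => transProb d s v + transProb d s (v - stepVec d j)) z := by
  have h2d : (2 * d : ℝ≥0∞) ≠ 0 := by simp; omega
  calc transProb d (2 * s) z + transProb d (2 * s + 1) z
      = (2 * d : ℝ≥0∞)⁻¹ * (2 * d * transProb d (2 * s) z
          + ∑ j : Fin (2 * d), transProb d (2 * s) (z - stepVec d j)) := by
        rw [transProb_succ, mul_add, ← mul_assoc, ENNReal.inv_mul_cancel h2d (by finiteness),
          one_mul]
    _ = _ := by
        simp_rw [autocorr_add_comp_sub, autocorr_transProb,
          sum_fin_two_mul_stepVec d fun e => transProb d (2 * s) (z - e), sub_neg_eq_add,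
          Finset.sum_add_distrib, Finset.sum_const, Finset.card_range, nsmul_eq_mul]
        ring

end TransitionProbability

lemma digit_eq_floor_div {b t i : ℕ} (hb : 0 < b) (hi : i < t) (u : ℝ) :
    digit b i u = ⌊u * (b : ℝ) ^ t⌋₊ / b ^ (t - 1 - i) % b := by
  have hpow : u * (b : ℝ) ^ (i + 1) = u * (b : ℝ) ^ t / ((b ^ (t - 1 - i) : ℕ) : ℝ) := by
    rw [eq_div_iff (by positivity), Nat.cast_pow, mul_assoc, ← pow_add,
      show i + 1 + (t - 1 - i) = t by omega]
  rw [digit, Int.floor_toNat, hpow, Nat.floor_div_natCast]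

lemma walk_zero_eq_stepSum {d t : ℕ} (hd : 0 < d) {u : ℝ} (m : Fin ((2 * d) ^ t))
    (hm : (m : ℕ) = ⌊u * ((2 * d : ℕ) : ℝ) ^ t⌋₊) :
    walk d 0 u t = stepSum d (finFunctionFinEquiv.symm m) := by
  simp only [walk, zero_add, stepSum, finFunctionFinEquiv_symm_apply_val]
  rw [Fin.sum_univ_eq_sum_range (fun i => stepVec d (m / (2 * d) ^ i % (2 * d)))]
  conv_rhs => rw [← Finset.sum_range_reflect]
  refine Finset.sum_congr rfl fun i hi => ?_
  rw [digit_eq_floor_div (by omega) (Finset.mem_range.mp hi), ← hm]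

lemma P0_floor_mul_pow_eq {b t m : ℕ} (hb : 0 < b) (hm : m < b ^ t) :
    P0 {u | ⌊u * (b : ℝ) ^ t⌋₊ = m} = (b : ℝ≥0∞)⁻¹ ^ t := by
  have hB : (0 : ℝ) < (b : ℝ) ^ t := by positivity
  have hcell : {u | ⌊u * (b : ℝ) ^ t⌋₊ = m} ∩ Set.Ico 0 1
      = Set.Ico ((m : ℝ) / (b : ℝ) ^ t) ((m + 1) / (b : ℝ) ^ t) := by
    have hm1 : (m : ℝ) + 1 ≤ (b : ℝ) ^ t := by exact_mod_cast hm
    ext u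
    simp only [Set.mem_inter_iff, Set.mem_ofPred_eq, Set.mem_Ico, div_le_iff₀ hB, lt_div_iff₀ hB]
    constructor
    · rintro ⟨hu, hu0, -⟩
      exact (Nat.floor_eq_iff (by positivity)).mp hu
    · rintro ⟨hlo, hhi⟩
      have hu0 : 0 ≤ u := nonneg_of_mul_nonneg_left (le_trans (by positivity) hlo) hB
      refine ⟨(Nat.floor_eq_iff (by positivity)).mpr ⟨hlo, hhi⟩, hu0, ?_⟩
      nlinarith
  rw [P0, Measure.restrict_apply' measurableSet_Ico, hcell, Real.volume_Ico, ← sub_div,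
    add_sub_cancel_left, one_div, ENNReal.ofReal_inv_of_pos hB, ← Nat.cast_pow,
    ENNReal.ofReal_natCast, Nat.cast_pow, ENNReal.inv_pow]

/-- On the cell `⌊u (2d)^t⌋ = m` the first `t` steps of the walk are the base-`2d` digits of `m`,
read from the most significant one. -/
lemma P0_walk_zero_eq {d : ℕ} (hd : 0 < d) (t : ℕ) (v : Fin d → ℤ) :
    P0 {u | walk d 0 u t = v} = transProb d t v := by
  set N : ℝ → ℕ := fun u => ⌊u * ((2 * d : ℕ) : ℝ) ^ t⌋₊
  set F := Finset.univ.filter fun m : Fin ((2 * d) ^ t) =>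
    stepSum d (finFunctionFinEquiv.symm m) = v
  have hcells : P0 {u | walk d 0 u t = v} = P0 (⋃ m ∈ F, {u | N u = m}) := by
    simp only [P0, Measure.restrict_apply' measurableSet_Ico]
    congr 1
    ext u
    simp only [Set.mem_inter_iff, Set.mem_ofPred_eq, Set.mem_iUnion, exists_prop]
    refine and_congr_left fun hu => ⟨fun hwalk => ?_, fun ⟨m, hmF, hm⟩ => ?_⟩
    · have hN : N u < (2 * d) ^ t := by
        rw [Nat.floor_lt (mul_nonneg hu.1 (by positivity)), Nat.cast_pow]
        exact mul_lt_of_lt_one_left (by positivity) hu.2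
      refine ⟨⟨N u, hN⟩, Finset.mem_filter.mpr ⟨Finset.mem_univ _, ?_⟩, rfl⟩
      rw [← walk_zero_eq_stepSum hd _ rfl, hwalk]
    · rw [walk_zero_eq_stepSum hd m hm.symm]
      exact (Finset.mem_filter.mp hmF).2
  have hmeas : ∀ m ∈ F, MeasurableSet {u | N u = m} := fun m _ =>
    (Nat.measurable_floor.comp (measurable_id.mul_const _)) (measurableSet_singleton _)
  have hdisj : (F : Set (Fin ((2 * d) ^ t))).PairwiseDisjoint fun m => {u | N u = m} :=
    fun m _ m' _ hne => Set.disjoint_left.mpr fun u hu hu' => hne (Fin.ext (hu.symm.trans hu'))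
  rw [hcells, measure_biUnion_finset hdisj hmeas, transProb,
    ← finFunctionFinEquiv.symm.sum_comp, ← Finset.sum_filter]
  refine Finset.sum_congr rfl fun m _ => ?_
  rw [P0_floor_mul_pow_eq (by omega) m.isLt]
  push_cast
  rfl

lemma satisfiesRearrangement_greenE (d : ℕ) : SatisfiesRearrangement (greenE d 0) := by
  rcases Nat.eq_zero_or_pos d with rfl | hd
  · intro f c
    simp only [Subsingleton.elim c 0, sub_zero, le_refl]
  have hgreen : greenE d 0 = fun z => ∑' s, (2 * d : ℝ≥0∞)⁻¹ * ∑ j ∈ Finset.range d,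
      autocorr (fun v => transProb d s v + transProb d s (v - stepVec d j)) z := by
    funext z
    simp_rw [greenE, P0_walk_zero_eq hd, ← transProb_two_mul_add_succ d hd, ENNReal.tsum_add]
    exact (tsum_even_add_odd (f := fun t => transProb d t z) ENNReal.summable
      ENNReal.summable).symm
  rw [hgreen]
  exact .tsum fun s => .const_mul (.finsetSum fun j _ => .autocorr _) _

theorem green_rearrangement_general (d : ℕ) (a : Fin d → ℤ) (n : ℕ) :
    ∑' p : (Fin d → ℤ) × (Fin d → ℤ),
        greenNE d n 0 p.1 * greenNE d n 0 p.2 * greenE d 0 (p.1 - p.2 - a)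
      ≤ ∑' p : (Fin d → ℤ) × (Fin d → ℤ),
          greenNE d n 0 p.1 * greenNE d n 0 p.2 * greenE d 0 (p.1 - p.2) :=
  satisfiesRearrangement_greenE d (greenNE d n 0) a

/-- **Rearrangement inequality for Green kernels** (Lemma 3.1, first part): for `d ≥ 5`,
all `a ∈ ℤ^d` and `n ≥ 1`,
`∑_{x,y} G_n(0,x) G_n(0,y) G(0, x−y−a) ≤ ∑_{x,y} G_n(0,x) G_n(0,y) G(0, x−y)`. -/
theorem green_rearrangement (d : ℕ) (hd : 5 ≤ d) (a : Fin d → ℤ) (n : ℕ) (hn : 1 ≤ n) :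
    ∑' p : (Fin d → ℤ) × (Fin d → ℤ),
        greenNE d n 0 p.1 * greenNE d n 0 p.2 * greenE d 0 (p.1 - p.2 - a)
      ≤ ∑' p : (Fin d → ℤ) × (Fin d → ℤ),
          greenNE d n 0 p.1 * greenNE d n 0 p.2 * greenE d 0 (p.1 - p.2) :=
  green_rearrangement_general d a n
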